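/- arXiv:2012.14064 — 4 statements merged into one kernel-verified Lean document; each statement's English description precedes it below -/
import Mathlib

section
/- Let 𝔐 be a generalized Kisin module of height h and let T = 𝔐[u^∞] := {x ∈ 𝔐 : u^l • x = 0 for some l} be its u-power-torsion submodule. Then φ_𝔐(T) ⊆ T; the map ψ sends T into the canonical image of φ*T in φ*𝔐 (which equals the u-power-torsion submodule of φ*𝔐); with the restricted maps, T is a generalized Kisin module of height h; and with the induced maps, the quotient 𝔐/T is a generalized Kisin module of height h on which multiplication by u is injective. Thus 0 → 𝔐[u^∞] → 𝔐 → 𝔐/𝔐[u^∞] → 0 is a short exact sequence of generalized Kisin modules of height h with étale quotient. (Lemma 6.3.) -/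
open PowerSeries

/-- The universal property characterizing `ι : M → P` as the base change of `M` along the
ring endomorphism `φ` (i.e. `P ≅ R ⊗_{φ,R} M` with `ι x = 1 ⊗ x`): every `φ`-semilinear
map out of `M` factors uniquely through an `R`-linear map out of `P`. -/
def IsSemilinearBaseChange {R : Type} [CommRing R] (φ : R →+* R)
    {M : Type} [AddCommGroup M] [Module R M]
    {P : Type} [AddCommGroup P] [Module R P] (ι : M →ₛₗ[φ] P) : Prop :=
  ∀ (Q : Type) [AddCommGroup Q] [Module R Q] (g : M →ₛₗ[φ] Q),
    ∃! h : P →ₗ[R] Q, ∀ x : M, h (ι x) = g x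

/-- The data exhibiting a module `M` as a *generalized Kisin module of height `hh`*
(relative to a ring endomorphism `φ` of `R` and an element `E : R`):
a `φ`-semilinear additive map `phiM : M → M`; a model `P` of the base change
`φ*M = R ⊗_{φ,R} M`, given by a `φ`-semilinear map `ι : M → P` satisfying the universal
property of base change; the linearization `lift = 1 ⊗ phiM : φ*M → M` (characterized by
`lift (ι x) = phiM x`); and an `R`-linear map `ψ : M → φ*M` such that
`ψ ∘ lift = E ^ hh • id` and `lift ∘ ψ = E ^ hh • id`. -/
structure GenKisinData {R : Type} [CommRing R] (φ : R →+* R) (E : R) (hh : ℕ)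
    (M : Type) [AddCommGroup M] [Module R M] : Type 1 where
  phiM : M →ₛₗ[φ] M
  P : Type
  [addCommGroupP : AddCommGroup P]
  [moduleP : Module R P]
  ι : M →ₛₗ[φ] P
  isBaseChange : IsSemilinearBaseChange φ ι
  lift : P →ₗ[R] M
  lift_ι : ∀ x : M, lift (ι x) = phiM x
  ψ : M →ₗ[R] P
  ψ_lift : ∀ y : P, ψ (lift y) = E ^ hh • y
  lift_ψ : ∀ x : M, lift (ψ x) = E ^ hh • x

attribute [instance] GenKisinData.addCommGroupP GenKisinData.moduleP

/-- The submodule of elements killed by some power of `t`. -/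
def upowTorsion (R : Type) [CommRing R] (t : R) (M : Type) [AddCommGroup M] [Module R M] :
    Submodule R M where
  carrier := {x | ∃ l : ℕ, t ^ l • x = 0}
  zero_mem' := ⟨0, smul_zero _⟩
  add_mem' := by
    rintro a b ⟨l, hl⟩ ⟨m, hm⟩
    have h1 : t ^ (l + m) • a = 0 := by rw [add_comm, pow_add, mul_smul, hl, smul_zero]
    have h2 : t ^ (l + m) • b = 0 := by rw [pow_add, mul_smul, hm, smul_zero]
    exact ⟨l + m, by rw [smul_add, h1, h2, add_zero]⟩
  smul_mem' := by
    rintro c x ⟨l, hl⟩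
    exact ⟨l, by rw [smul_comm, hl, smul_zero]⟩

/-!
Since `φ u = u ^ p`, the map `φ_𝔐` and every linear map preserve `u`-power torsion.  The
ring `W⟦u⟧` is free over itself through `φ` with basis `1, u, …, u ^ (p - 1)`, so `φ^* N`
can be modelled on `N ^ p`, with `φ s` acting coordinatewise by `s`.  In this model `φ^*`
is exact, an element of `φ^* N` is `u`-power torsion iff all its coordinates are, and
`φ^* (𝔐 / T) = φ^* 𝔐 / φ^* T`; restricting and inducing `φ_𝔐` and `ψ` then gives the two
Kisin structures.  Finiteness holds because `W⟦u⟧` is noetherian.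
-/

section upowTorsion

variable {R : Type} [CommRing R] {t : R} {M N : Type} [AddCommGroup M] [Module R M]
  [AddCommGroup N] [Module R N]

theorem pow_smul_eq_zero_of_le {l L : ℕ} {x : M} (hx : t ^ l • x = 0) (hlL : l ≤ L) :
    t ^ L • x = 0 := by
  rw [← Nat.sub_add_cancel hlL, pow_add, mul_smul, hx, smul_zero]

theorem LinearMap.map_mem_upowTorsion {σ : R →+* R} {q : ℕ} (hσt : σ t = t ^ q)
    (f : M →ₛₗ[σ] N) {x : M} (hx : x ∈ upowTorsion R t M) : f x ∈ upowTorsion R t N := by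
  obtain ⟨l, hl⟩ := hx
  exact ⟨q * l, by rw [pow_mul, ← hσt, ← map_pow, ← f.map_smulₛₗ, hl, map_zero]⟩

theorem LinearEquiv.map_upowTorsion (e : M ≃ₗ[R] N) :
    (upowTorsion R t M).map (e : M →ₗ[R] N) = upowTorsion R t N := by
  ext y
  refine (Submodule.mem_map_equiv (upowTorsion R t M) (e := e)).trans
    ⟨fun hy => ?_, e.symm.map_mem_upowTorsion (pow_one t).symm⟩
  simpa using e.map_mem_upowTorsion (pow_one t).symm hy

theorem eq_zero_of_smul_eq_zero_quotient_upowTorsion {z : M ⧸ upowTorsion R t M}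
    (hz : t • z = 0) : z = 0 := by
  obtain ⟨x, rfl⟩ := Submodule.Quotient.mk_surjective _ z
  rw [← Submodule.Quotient.mk_smul, Submodule.Quotient.mk_eq_zero] at hz
  obtain ⟨l, hl⟩ := hz
  exact (Submodule.Quotient.mk_eq_zero _).2 ⟨l + 1, by rw [pow_succ, mul_smul, hl]⟩

end upowTorsion

/-- A basis of `R` regarded as a module over itself through `φ`, with its coordinate
functionals: `r = ∑ i, basis i * φ (coord i r)`. -/
structure EndoBasis (R : Type) [CommRing R] (φ : R →+* R) (n : ℕ) where
  basis : Fin n → R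
  coord : Fin n → R →+ R
  sum_basis_mul_coord (r : R) : ∑ i, basis i * φ (coord i r) = r
  coord_basis_mul (i j : Fin n) (s : R) : coord j (basis i * φ s) = if i = j then s else 0

namespace EndoBasis

variable {R : Type} [CommRing R] {φ : R →+* R} {n : ℕ} (d : EndoBasis R φ n)

theorem coord_mul_map (j : Fin n) (r s : R) : d.coord j (r * φ s) = d.coord j r * s := by
  conv_lhs => rw [← d.sum_basis_mul_coord r]
  simp only [Finset.sum_mul, map_sum, mul_assoc, ← map_mul, d.coord_basis_mul,
    Finset.sum_ite_eq', Finset.mem_univ, if_true]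

theorem sum_coord_mul_basis_mul (j : Fin n) (r s : R) :
    ∑ l, d.coord j (r * d.basis l) * d.coord l s = d.coord j (r * s) := by
  conv_rhs => rw [← d.sum_basis_mul_coord s]
  simp only [Finset.mul_sum, map_sum, ← mul_assoc, d.coord_mul_map]

theorem coord_basis (i j : Fin n) : d.coord j (d.basis i) = if i = j then 1 else 0 := by
  simpa using d.coord_basis_mul i j 1

/-- The pullback `φ^* N = R ⊗_{φ,R} N`, modelled on `N ^ n` through the basis `d`. -/
def Pullback (_d : EndoBasis R φ n) (N : Type) : Type := Fin n → N

variable {d} {N : Type}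

@[ext]
theorem ext {m m' : d.Pullback N} (h : ∀ j, m j = m' j) : m = m' := funext h

variable [AddCommGroup N]

instance : AddCommGroup (d.Pullback N) := inferInstanceAs (AddCommGroup (Fin n → N))

theorem add_apply (m m' : d.Pullback N) (j : Fin n) : (m + m') j = m j + m' j := rfl

theorem sum_apply {α : Type} (s : Finset α) (f : α → d.Pullback N) (j : Fin n) :
    (∑ a ∈ s, f a) j = ∑ a ∈ s, f a j :=
  Finset.sum_apply (M := fun _ => N) j s f

variable [Module R N]

-- `m` stands for `∑ i, basis i ⊗ m i`; expand each `r * basis i` in the basis.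
instance : SMul R (d.Pullback N) := ⟨fun r m j => ∑ i, d.coord j (r * d.basis i) • m i⟩

theorem smul_apply (r : R) (m : d.Pullback N) (j : Fin n) :
    (r • m) j = ∑ i, d.coord j (r * d.basis i) • m i := rfl

instance : Module R (d.Pullback N) := by
  refine Module.ofMinimalAxioms (fun r m m' => ?_) (fun r s m => ?_) (fun r s m => ?_)
    (fun m => ?_) <;> ext j
  · simp only [smul_apply, add_apply, smul_add, Finset.sum_add_distrib]
  · simp only [smul_apply, add_apply, add_mul, map_add, add_smul, Finset.sum_add_distrib]
  · simp only [smul_apply, Finset.smul_sum, smul_smul]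
    rw [Finset.sum_comm]
    simp only [← Finset.sum_smul, d.sum_coord_mul_basis_mul, mul_assoc]
  · simp only [smul_apply, one_mul, d.coord_basis, ite_smul, one_smul, zero_smul]
    exact Fintype.sum_ite_eq' (M := N) j m

theorem map_smul_apply (s : R) (m : d.Pullback N) (j : Fin n) : (φ s • m) j = s • m j := by
  simp [smul_apply, mul_comm (φ s), d.coord_basis_mul]

variable (d N)

def ι : N →ₛₗ[φ] d.Pullback N where
  toFun x j := d.coord j 1 • x
  map_add' x y := funext fun _ => smul_add _ x y
  map_smul' s x := ext fun j =>
    (smul_comm _ s x).trans (map_smul_apply (d := d) s (fun j => d.coord j 1 • x) j).symm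

variable {d N}

theorem ι_apply (x : N) (j : Fin n) : d.ι N x j = d.coord j 1 • x := rfl

theorem sum_basis_smul_ι (m : d.Pullback N) : ∑ i, d.basis i • d.ι N (m i) = m := by
  ext j
  simp only [sum_apply, smul_apply, ι_apply, smul_smul, ← Finset.sum_smul,
    d.sum_coord_mul_basis_mul, mul_one, d.coord_basis, ite_smul, one_smul, zero_smul]
  exact Fintype.sum_ite_eq' (M := N) j m

def lift {Q : Type} [AddCommGroup Q] [Module R Q] (g : N →ₛₗ[φ] Q) :
    d.Pullback N →ₗ[R] Q where
  toFun m := ∑ i, d.basis i • g (m i)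
  map_add' m m' := by simp only [add_apply, map_add, smul_add, Finset.sum_add_distrib]
  map_smul' r m := by
    simp only [smul_apply, map_sum, LinearMap.map_smulₛₗ, Finset.smul_sum, smul_smul,
      RingHom.id_apply]
    rw [Finset.sum_comm]
    simp only [← Finset.sum_smul, d.sum_basis_mul_coord, mul_comm r]

theorem lift_ι {Q : Type} [AddCommGroup Q] [Module R Q] (g : N →ₛₗ[φ] Q) (x : N) :
    d.lift g (d.ι N x) = g x := by
  simp only [lift, LinearMap.coe_mk, AddHom.coe_mk, ι_apply, LinearMap.map_smulₛₗ, smul_smul,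
    ← Finset.sum_smul, d.sum_basis_mul_coord, one_smul]

theorem isSemilinearBaseChange : IsSemilinearBaseChange φ (d.ι N) := by
  refine fun Q _ _ g => ⟨d.lift g, lift_ι g, fun f hf => LinearMap.ext fun m => ?_⟩
  rw [← sum_basis_smul_ι m, map_sum, map_sum]
  simp only [map_smul, hf, lift_ι]

variable (d) in
def map {N' : Type} [AddCommGroup N'] [Module R N'] (f : N →ₗ[R] N') :
    d.Pullback N →ₗ[R] d.Pullback N' where
  toFun m j := f (m j)
  map_add' m m' := funext fun j => f.map_add (m j) (m' j)
  map_smul' r m := ext fun j => by simp only [smul_apply, map_sum, map_smul]; rfl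

section map

variable {N' : Type} [AddCommGroup N'] [Module R N'] (f : N →ₗ[R] N')

theorem map_apply (m : d.Pullback N) (j : Fin n) : d.map f m j = f (m j) := rfl

theorem map_ι (x : N) : d.map f (d.ι N x) = d.ι N' (f x) :=
  ext fun j => by simp only [map_apply, ι_apply, map_smul]

theorem map_injective (hf : Function.Injective f) : Function.Injective (d.map f) :=
  fun _ _ h => ext fun j => hf (congrFun h j)

theorem map_surjective (hf : Function.Surjective f) : Function.Surjective (d.map f) :=
  fun m => ⟨fun j => (hf (m j)).choose, ext fun j => (hf (m j)).choose_spec⟩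

theorem map_lift (g : N →ₛₗ[φ] N) (h : N →ₛₗ[φ] N') (hgh : f.comp g = h) (m : d.Pullback N) :
    f (d.lift g m) = d.lift h m := by
  simp only [lift, LinearMap.coe_mk, AddHom.coe_mk, map_sum, map_smul, ← hgh,
    LinearMap.comp_apply]

end map

variable (d) in
def codRestrict {N' : Type} [AddCommGroup N'] [Module R N'] (q : Submodule R N)
    (f : N' →ₗ[R] d.Pullback N) (hf : ∀ x j, f x j ∈ q) : N' →ₗ[R] d.Pullback q where
  toFun x j := ⟨f x j, hf x j⟩
  map_add' x y := funext fun j => Subtype.ext (congrFun (f.map_add x y) j)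
  map_smul' r x := ext fun j => Subtype.ext <| (congrFun (f.map_smul r x) j).trans <|
    (map_sum q.subtype (fun i => d.coord j (r * d.basis i) • (⟨f x i, hf x i⟩ : q)) _).symm

theorem map_codRestrict {N' : Type} [AddCommGroup N'] [Module R N'] (q : Submodule R N)
    (f : N' →ₗ[R] d.Pullback N) (hf : ∀ x j, f x j ∈ q) (x : N') :
    d.map q.subtype (d.codRestrict q f hf x) = f x := rfl

section upowTorsion

variable {t : R} {q : ℕ} (hφt : φ t = t ^ q)
include hφt

theorem mem_upowTorsion_iff (hq : 0 < q) (m : d.Pullback N) :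
    m ∈ upowTorsion R t (d.Pullback N) ↔ ∀ j, m j ∈ upowTorsion R t N := by
  have hφ_pow (l : ℕ) : φ (t ^ l) = t ^ (q * l) := by rw [map_pow, hφt, pow_mul]
  constructor
  · rintro ⟨l, hl⟩ j
    refine ⟨l, ?_⟩
    rw [← map_smul_apply, hφ_pow, pow_smul_eq_zero_of_le hl (Nat.le_mul_of_pos_left l hq)]
    rfl
  · intro hm
    choose l hl using hm
    refine ⟨q * Finset.univ.sup l, ext fun j => ?_⟩
    rw [← hφ_pow, map_smul_apply]
    exact pow_smul_eq_zero_of_le (hl j) (Finset.le_sup (Finset.mem_univ j))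

theorem range_map_upowTorsion_subtype (hq : 0 < q) :
    LinearMap.range (d.map (upowTorsion R t N).subtype) = upowTorsion R t (d.Pullback N) := by
  ext m
  rw [mem_upowTorsion_iff hφt hq]
  refine ⟨?_, fun hm => ⟨fun j => ⟨m j, hm j⟩, rfl⟩⟩
  rintro ⟨m', rfl⟩ j
  exact (m' j).2

end upowTorsion

end EndoBasis

namespace IsSemilinearBaseChange

variable {R : Type} [CommRing R] {φ : R →+* R} {M P P' : Type} [AddCommGroup M] [Module R M]
  [AddCommGroup P] [Module R P] [AddCommGroup P'] [Module R P'] {ι : M →ₛₗ[φ] P}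
  {ι' : M →ₛₗ[φ] P'}

theorem ext (hι : IsSemilinearBaseChange φ ι) {Q : Type} [AddCommGroup Q] [Module R Q]
    {f f' : P →ₗ[R] Q} (h : ∀ x, f (ι x) = f' (ι x)) : f = f' :=
  (hι Q (f.comp ι)).unique (fun _ => rfl) fun x => (h x).symm

noncomputable def equiv (hι : IsSemilinearBaseChange φ ι) (hι' : IsSemilinearBaseChange φ ι') :
    P ≃ₗ[R] P' :=
  LinearEquiv.ofLinearMap (hι P' ι').exists.choose (hι' P ι).exists.choose
    (hι'.ext fun x => by
      simp only [LinearMap.comp_apply, (hι' P ι).exists.choose_spec,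
        (hι P' ι').exists.choose_spec, LinearMap.id_apply])
    (hι.ext fun x => by
      simp only [LinearMap.comp_apply, (hι' P ι).exists.choose_spec,
        (hι P' ι').exists.choose_spec, LinearMap.id_apply])

theorem equiv_apply (hι : IsSemilinearBaseChange φ ι) (hι' : IsSemilinearBaseChange φ ι')
    (x : M) : hι.equiv hι' (ι x) = ι' x :=
  (hι P' ι').exists.choose_spec x

end IsSemilinearBaseChange

namespace GenKisinData

variable {R : Type} [CommRing R] {φ : R →+* R} {E : R} {h n : ℕ} {M : Type} [AddCommGroup M]
  [Module R M] (d : EndoBasis R φ n) (D : GenKisinData φ E h M)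

noncomputable def pullbackEquiv : d.Pullback M ≃ₗ[R] D.P :=
  d.isSemilinearBaseChange.equiv D.isBaseChange

theorem pullbackEquiv_ι (x : M) : D.pullbackEquiv d (d.ι M x) = D.ι x :=
  d.isSemilinearBaseChange.equiv_apply D.isBaseChange x

theorem pullbackEquiv_symm_ι (x : M) : (D.pullbackEquiv d).symm (D.ι x) = d.ι M x :=
  (LinearEquiv.symm_apply_eq _).2 (D.pullbackEquiv_ι d x).symm

theorem lift_pullbackEquiv (m : d.Pullback M) :
    D.lift (D.pullbackEquiv d m) = d.lift D.phiM m :=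
  LinearMap.congr_fun (d.isSemilinearBaseChange.ext
    (f := D.lift ∘ₗ (D.pullbackEquiv d).toLinearMap) (f' := d.lift D.phiM) fun x => by
      simp only [LinearMap.comp_apply, LinearEquiv.coe_coe, pullbackEquiv_ι, D.lift_ι,
        EndoBasis.lift_ι]) m

noncomputable def pullbackψ : M →ₗ[R] d.Pullback M :=
  (D.pullbackEquiv d).symm.toLinearMap ∘ₗ D.ψ

theorem pullbackψ_lift (m : d.Pullback M) : D.pullbackψ d (d.lift D.phiM m) = E ^ h • m := by
  simp only [pullbackψ, LinearMap.comp_apply, LinearEquiv.coe_coe, ← lift_pullbackEquiv,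
    D.ψ_lift, map_smul, LinearEquiv.symm_apply_apply]

theorem lift_pullbackψ (x : M) : d.lift D.phiM (D.pullbackψ d x) = E ^ h • x := by
  simp only [pullbackψ, LinearMap.comp_apply, LinearEquiv.coe_coe, ← lift_pullbackEquiv,
    LinearEquiv.apply_symm_apply, D.lift_ψ]

variable {t : R} {q : ℕ} (hφt : φ t = t ^ q) (hq : 0 < q)

local notation "T" => upowTorsion R t M

section torsion

def torsionPhi : T →ₛₗ[φ] T :=
  D.phiM.restrict fun _ => D.phiM.map_mem_upowTorsion hφt

noncomputable def torsionψ : T →ₗ[R] d.Pullback T :=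
  d.codRestrict T (D.pullbackψ d ∘ₗ (Submodule.subtype T)) fun x =>
    (d.mem_upowTorsion_iff hφt hq _).1
      ((D.pullbackψ d).map_mem_upowTorsion (pow_one t).symm x.2)

theorem subtype_lift_torsionPhi (m : d.Pullback T) :
    (d.lift (D.torsionPhi hφt) m : M) = d.lift D.phiM (d.map (Submodule.subtype T) m) :=
  d.map_lift (Submodule.subtype T) _ _ rfl m

noncomputable def torsion : GenKisinData φ E h T where
  phiM := D.torsionPhi hφt
  P := d.Pullback T
  ι := d.ι T
  isBaseChange := d.isSemilinearBaseChange
  lift := d.lift (D.torsionPhi hφt)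
  lift_ι := d.lift_ι _
  ψ := D.torsionψ d hφt hq
  ψ_lift m := d.map_injective (Submodule.subtype T) Subtype.val_injective <| by
    rw [torsionψ, d.map_codRestrict, LinearMap.comp_apply, Submodule.subtype_apply,
      subtype_lift_torsionPhi, pullbackψ_lift, map_smul]
  lift_ψ x := Subtype.ext <| by
    rw [subtype_lift_torsionPhi, torsionψ, d.map_codRestrict, LinearMap.comp_apply,
      Submodule.subtype_apply, lift_pullbackψ, Submodule.coe_smul]

noncomputable def torsionEmbedding : d.Pullback T →ₗ[R] D.P :=
  (D.pullbackEquiv d).toLinearMap ∘ₗ d.map (Submodule.subtype T)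

theorem torsionEmbedding_ι (x : T) :
    D.torsionEmbedding d (d.ι T x) = D.ι x :=
  (congrArg (D.pullbackEquiv d) (d.map_ι (Submodule.subtype T) x)).trans (D.pullbackEquiv_ι d x)

theorem torsionEmbedding_ψ (x : T) :
    D.torsionEmbedding d (D.torsionψ d hφt hq x) = D.ψ x :=
  (D.pullbackEquiv d).apply_symm_apply (D.ψ x)

include hφt hq in
theorem range_torsionEmbedding :
    LinearMap.range (D.torsionEmbedding (t := t) d) = upowTorsion R t D.P := by
  rw [torsionEmbedding, LinearMap.range_comp, d.range_map_upowTorsion_subtype hφt hq,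
    LinearEquiv.map_upowTorsion]

end torsion

section quotient

def quotientPhi : M ⧸ T →ₛₗ[φ] M ⧸ T :=
  Submodule.mapQ T T D.phiM fun _ => D.phiM.map_mem_upowTorsion hφt

noncomputable def quotientψ : M ⧸ T →ₗ[R] d.Pullback (M ⧸ T) :=
  Submodule.liftQ T (d.map (Submodule.mkQ T) ∘ₗ D.pullbackψ d) fun x hx => by
    have hψx := (d.mem_upowTorsion_iff hφt hq _).1 ((D.pullbackψ d).map_mem_upowTorsion
      (pow_one t).symm hx)
    exact LinearMap.mem_ker.2 <|
      EndoBasis.ext fun j => (Submodule.Quotient.mk_eq_zero T).2 (hψx j)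

theorem quotientψ_mk (x : M) :
    D.quotientψ d hφt hq (Submodule.Quotient.mk x) = d.map (Submodule.mkQ T) (D.pullbackψ d x) :=
  rfl

theorem mkQ_lift (m : d.Pullback M) :
    Submodule.mkQ T (d.lift D.phiM m) = d.lift (D.quotientPhi hφt) (d.map (Submodule.mkQ T) m) :=
  d.map_lift _ _ ((D.quotientPhi hφt).comp (Submodule.mkQ T))
    (Submodule.mapQ_mkQ T T D.phiM).symm m

noncomputable def quotient : GenKisinData φ E h (M ⧸ T) where
  phiM := D.quotientPhi hφt
  P := d.Pullback (M ⧸ T)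
  ι := d.ι (M ⧸ T)
  isBaseChange := d.isSemilinearBaseChange
  lift := d.lift (D.quotientPhi hφt)
  lift_ι := d.lift_ι _
  ψ := D.quotientψ d hφt hq
  ψ_lift y := by
    obtain ⟨m, rfl⟩ := d.map_surjective _ (Submodule.mkQ_surjective T) y
    rw [← mkQ_lift, Submodule.mkQ_apply, quotientψ_mk, pullbackψ_lift, map_smul]
  lift_ψ z := by
    obtain ⟨x, rfl⟩ := Submodule.mkQ_surjective T z
    rw [Submodule.mkQ_apply, quotientψ_mk, ← mkQ_lift, lift_pullbackψ, map_smul,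
      Submodule.mkQ_apply]

noncomputable def quotientProjection : D.P →ₗ[R] d.Pullback (M ⧸ T) :=
  d.map (Submodule.mkQ T) ∘ₗ (D.pullbackEquiv d).symm.toLinearMap

theorem quotientProjection_ι (x : M) :
    D.quotientProjection (t := t) d (D.ι x) = d.ι (M ⧸ T) (Submodule.Quotient.mk x) :=
  (congrArg (d.map (Submodule.mkQ T)) (D.pullbackEquiv_symm_ι d x)).trans
    (d.map_ι (Submodule.mkQ T) x)

end quotient

end GenKisinData

theorem Nat.le_and_dvd_sub_iff_eq_mod {p i n : ℕ} (hi : i < p) :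
    i ≤ n ∧ p ∣ n - i ↔ i = n % p := by
  constructor
  · rintro ⟨hin, c, hc⟩
    rw [show n = i + p * c by omega, Nat.add_mul_mod_self_left, Nat.mod_eq_of_lt hi]
  · rintro rfl
    exact ⟨Nat.mod_le n p, Nat.dvd_sub_mod n⟩

namespace PowerSeries

variable {A : Type} [CommRing A] {σ : A ≃+* A} {p : ℕ} {φ : A⟦X⟧ →+* A⟦X⟧}
  (hφ : ∀ (F : A⟦X⟧) (n : ℕ), coeff n (φ F) = if p ∣ n then σ (coeff (n / p) F) else 0)
include hφ

theorem coeff_X_pow_mul_frobenius (F : A⟦X⟧) (i n : ℕ) :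
    coeff n (X ^ i * φ F) = if i ≤ n ∧ p ∣ n - i then σ (coeff ((n - i) / p) F) else 0 := by
  rw [coeff_X_pow_mul', hφ]
  by_cases hin : i ≤ n <;> simp [hin]

variable (hp : 0 < p)
include hp

theorem frobenius_X : φ X = X ^ p := by
  ext n
  rw [hφ, coeff_X_pow]
  split_ifs with hdvd hn hn
  · rw [hn, Nat.div_self hp, coeff_one_X, map_one]
  · obtain ⟨c, rfl⟩ := hdvd
    rw [Nat.mul_div_cancel_left c hp, coeff_X, if_neg (by rintro rfl; exact hn (mul_one p)),
      map_zero]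
  · exact absurd (hn ▸ dvd_refl p) hdvd
  · rfl

noncomputable def frobeniusEndoBasis : EndoBasis A⟦X⟧ φ p where
  basis i := X ^ (i : ℕ)
  coord j := AddMonoidHom.mk' (fun F => mk fun m => σ.symm (coeff (p * m + j) F)) fun F G => by
    ext m
    simp
  sum_basis_mul_coord r := by
    ext n
    simp only [map_sum, coeff_X_pow_mul_frobenius hφ, AddMonoidHom.mk'_apply, coeff_mk,
      RingEquiv.apply_symm_apply]
    rw [Finset.sum_eq_single ⟨n % p, Nat.mod_lt n hp⟩]
    · rw [if_pos ((Nat.le_and_dvd_sub_iff_eq_mod (Nat.mod_lt n hp)).2 rfl),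
        Nat.mul_div_cancel' (Nat.dvd_sub_mod n), Nat.sub_add_cancel (Nat.mod_le n p)]
    · intro i _ hi
      rw [if_neg fun h => hi (Fin.ext ((Nat.le_and_dvd_sub_iff_eq_mod i.2).1 h))]
    · simp
  coord_basis_mul i j s := by
    ext m
    simp only [AddMonoidHom.mk'_apply, coeff_mk, coeff_X_pow_mul_frobenius hφ,
      Nat.le_and_dvd_sub_iff_eq_mod i.2, Nat.mul_add_mod_self_left, Nat.mod_eq_of_lt j.2]
    by_cases hij : i = j
    · subst hij
      simp [Nat.mul_div_cancel_left m hp]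
    · simp [hij, Fin.val_injective.ne hij]

end PowerSeries

theorem stmt_6_general
    (p : ℕ) [Fact p.Prime] (k : Type) [Field k] [CharP k p] [PerfectRing k p]
    (φ : PowerSeries (WittVector p k) →+* PowerSeries (WittVector p k))
    (hφ : ∀ (F : PowerSeries (WittVector p k)) (n : ℕ),
      PowerSeries.coeff n (φ F) =
        if p ∣ n then
          (WittVector.frobeniusEquiv p k) (PowerSeries.coeff (n / p) F)
        else 0)
    (E : Polynomial (WittVector p k))
    (h : ℕ)
    (M : Type) [AddCommGroup M] [Module (PowerSeries (WittVector p k)) M]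
    [Module.Finite (PowerSeries (WittVector p k)) M]
    (D : GenKisinData φ (E : PowerSeries (WittVector p k)) h M) :
    (∀ x ∈ upowTorsion (PowerSeries (WittVector p k)) PowerSeries.X M,
        D.phiM x ∈ upowTorsion (PowerSeries (WittVector p k)) PowerSeries.X M) ∧
    Module.Finite (PowerSeries (WittVector p k))
        (upowTorsion (PowerSeries (WittVector p k)) PowerSeries.X M) ∧
    Module.Finite (PowerSeries (WittVector p k))
        (M ⧸ upowTorsion (PowerSeries (WittVector p k)) PowerSeries.X M) ∧
    (∃ DT : GenKisinData φ (E : PowerSeries (WittVector p k)) h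
        (upowTorsion (PowerSeries (WittVector p k)) PowerSeries.X M),
      (∀ x : upowTorsion (PowerSeries (WittVector p k)) PowerSeries.X M,
        (DT.phiM x : M) = D.phiM (x : M)) ∧
      ∃ j : DT.P →ₗ[PowerSeries (WittVector p k)] D.P,
        (∀ x : upowTorsion (PowerSeries (WittVector p k)) PowerSeries.X M,
          j (DT.ι x) = D.ι (x : M)) ∧
        LinearMap.range j = upowTorsion (PowerSeries (WittVector p k)) PowerSeries.X D.P ∧
        (∀ x : upowTorsion (PowerSeries (WittVector p k)) PowerSeries.X M,
          j (DT.ψ x) = D.ψ (x : M)) ∧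
        (∀ x : upowTorsion (PowerSeries (WittVector p k)) PowerSeries.X M,
          D.ψ (x : M) ∈ LinearMap.range j)) ∧
    (∃ DQ : GenKisinData φ (E : PowerSeries (WittVector p k)) h
        (M ⧸ upowTorsion (PowerSeries (WittVector p k)) PowerSeries.X M),
      (∀ y : M, DQ.phiM (Submodule.Quotient.mk y) = Submodule.Quotient.mk (D.phiM y)) ∧
      (∃ π : D.P →ₗ[PowerSeries (WittVector p k)] DQ.P,
        (∀ y : M, π (D.ι y) = DQ.ι (Submodule.Quotient.mk y)) ∧
        (∀ y : M, DQ.ψ (Submodule.Quotient.mk y) = π (D.ψ y))) ∧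
      (∀ z : M ⧸ upowTorsion (PowerSeries (WittVector p k)) PowerSeries.X M,
        (PowerSeries.X : PowerSeries (WittVector p k)) • z = 0 → z = 0)) := by
  have hp : 0 < p := (Fact.out : p.Prime).pos
  have hφX : φ X = X ^ p := frobenius_X hφ hp
  let d := frobeniusEndoBasis hφ hp
  refine ⟨fun _ => D.phiM.map_mem_upowTorsion hφX, inferInstance, inferInstance,
    ⟨D.torsion d hφX hp, fun _ => rfl, D.torsionEmbedding d, D.torsionEmbedding_ι d,
      D.range_torsionEmbedding d hφX hp, D.torsionEmbedding_ψ d hφX hp,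
      fun x => ⟨_, D.torsionEmbedding_ψ d hφX hp x⟩⟩,
    ⟨D.quotient d hφX hp, fun _ => rfl, ⟨D.quotientProjection d, D.quotientProjection_ι d,
      fun _ => rfl⟩, fun _ => eq_zero_of_smul_eq_zero_quotient_upowTorsion⟩⟩

/-- **Lemma 6.3**: for a generalized Kisin module `𝔐` of height `h`, the `u`-power-torsion
submodule `T = 𝔐[u^∞]` is stable under `φ_𝔐`; `ψ` sends `T` into the canonical image of
`φ*T` in `φ*𝔐`, which is the `u`-power-torsion submodule of `φ*𝔐`; with the restricted
maps `T` is a generalized Kisin module of height `h`; and with the induced maps the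
quotient `𝔐/T` is a generalized Kisin module of height `h` with no `u`-torsion.  Thus
`0 → 𝔐[u^∞] → 𝔐 → 𝔐/𝔐[u^∞] → 0` is a short exact sequence of generalized Kisin
modules of height `h` with étale quotient. -/
theorem stmt_6
    (p : ℕ) [Fact p.Prime] (k : Type) [Field k] [CharP k p] [PerfectRing k p]
    (e : ℕ) (he : 1 ≤ e)
    (φ : PowerSeries (WittVector p k) →+* PowerSeries (WittVector p k))
    (hφ : ∀ (F : PowerSeries (WittVector p k)) (n : ℕ),
      PowerSeries.coeff n (φ F) =
        if p ∣ n then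
          (WittVector.frobeniusEquiv p k) (PowerSeries.coeff (n / p) F)
        else 0)
    (E : Polynomial (WittVector p k)) (hEmonic : E.Monic) (hEdeg : E.natDegree = e)
    (hEcoeff : ∀ i < e, (p : WittVector p k) ∣ E.coeff i)
    (hEconst : ¬ (p : WittVector p k) ^ 2 ∣ E.coeff 0)
    (h : ℕ)
    (M : Type) [AddCommGroup M] [Module (PowerSeries (WittVector p k)) M]
    [Module.Finite (PowerSeries (WittVector p k)) M]
    (D : GenKisinData φ (E : PowerSeries (WittVector p k)) h M) :
    (∀ x ∈ upowTorsion (PowerSeries (WittVector p k)) PowerSeries.X M,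
        D.phiM x ∈ upowTorsion (PowerSeries (WittVector p k)) PowerSeries.X M) ∧
    Module.Finite (PowerSeries (WittVector p k))
        (upowTorsion (PowerSeries (WittVector p k)) PowerSeries.X M) ∧
    Module.Finite (PowerSeries (WittVector p k))
        (M ⧸ upowTorsion (PowerSeries (WittVector p k)) PowerSeries.X M) ∧
    (∃ DT : GenKisinData φ (E : PowerSeries (WittVector p k)) h
        (upowTorsion (PowerSeries (WittVector p k)) PowerSeries.X M),
      (∀ x : upowTorsion (PowerSeries (WittVector p k)) PowerSeries.X M,
        (DT.phiM x : M) = D.phiM (x : M)) ∧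
      ∃ j : DT.P →ₗ[PowerSeries (WittVector p k)] D.P,
        (∀ x : upowTorsion (PowerSeries (WittVector p k)) PowerSeries.X M,
          j (DT.ι x) = D.ι (x : M)) ∧
        LinearMap.range j = upowTorsion (PowerSeries (WittVector p k)) PowerSeries.X D.P ∧
        (∀ x : upowTorsion (PowerSeries (WittVector p k)) PowerSeries.X M,
          j (DT.ψ x) = D.ψ (x : M)) ∧
        (∀ x : upowTorsion (PowerSeries (WittVector p k)) PowerSeries.X M,
          D.ψ (x : M) ∈ LinearMap.range j)) ∧
    (∃ DQ : GenKisinData φ (E : PowerSeries (WittVector p k)) h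
        (M ⧸ upowTorsion (PowerSeries (WittVector p k)) PowerSeries.X M),
      (∀ y : M, DQ.phiM (Submodule.Quotient.mk y) = Submodule.Quotient.mk (D.phiM y)) ∧
      (∃ π : D.P →ₗ[PowerSeries (WittVector p k)] DQ.P,
        (∀ y : M, π (D.ι y) = DQ.ι (Submodule.Quotient.mk y)) ∧
        (∀ y : M, DQ.ψ (Submodule.Quotient.mk y) = π (D.ψ y))) ∧
      (∀ z : M ⧸ upowTorsion (PowerSeries (WittVector p k)) PowerSeries.X M,
        (PowerSeries.X : PowerSeries (WittVector p k)) • z = 0 → z = 0)) :=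
  stmt_6_general p k φ hφ E h M D
end

section
/- Let f ∈ W[u] ⊆ 𝔖 be a monic polynomial of degree b ≥ 1 all of whose non-leading coefficients are divisible by p (a distinguished polynomial, so f ≡ u^b mod p). Then there is no unit z₀ of 𝔖 and no natural number j such that φ(f) = z₀ · f · E^j in 𝔖. (This non-existence is the key step in the proof of Lemma 6.2(3).) -/
/-!
Reducing modulo `p`, the distinguished polynomials `f` and `E` become `u ^ b` and `u ^ e`,
and `φ f`, which is again a distinguished polynomial, becomes `u ^ (p * b)`. The degree of a
distinguished factor is read off from the reduction, so `φ f = z₀ * f * E ^ j` forces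
`p * b = b + e * j`, hence `j ≠ 0`. Comparing `u`-adic orders, `ord (φ f) = p * ord f` while
`ord (z₀ * f * E ^ j) = ord f` because `E(0) ≠ 0`; so `f(0) ≠ 0`. The constant terms then give
`σ (f(0)) = z₀(0) * f(0) * E(0) ^ j ∈ p * f(0) * W`, which is impossible because `σ` preserves
the `p`-adic valuation of `f(0)`.
-/

open PowerSeries

namespace PowerSeries

variable {R : Type*} [CommRing R]

theorem eq_expand_map_of_coeff {p : ℕ} (hp : p ≠ 0) {σ : R →+* R} {φ : R⟦X⟧ →+* R⟦X⟧}
    (hφ : ∀ (F : R⟦X⟧) (n : ℕ),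
      coeff n (φ F) = if p ∣ n then σ (coeff (n / p) F) else 0) (F : R⟦X⟧) :
    φ F = expand p hp (map σ F) := by
  ext n
  rw [hφ, coeff_expand]
  split_ifs <;> simp [coeff_map]

theorem expand_coe {p : ℕ} (hp : p ≠ 0) (g : Polynomial R) :
    expand p hp (g : R⟦X⟧) = (Polynomial.expand R p g : R⟦X⟧) := by
  ext n
  rw [Polynomial.coeff_coe, Polynomial.coeff_expand (Nat.pos_of_ne_zero hp), coeff_expand]
  split_ifs <;> simp

theorem constantCoeff_expand_map {p : ℕ} (hp : p ≠ 0) (σ : R →+* R) (F : R⟦X⟧) :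
    constantCoeff (expand p hp (map σ F)) = σ (constantCoeff F) := by
  rw [constantCoeff_expand, ← coeff_zero_eq_constantCoeff_apply, coeff_map,
    coeff_zero_eq_constantCoeff_apply]

theorem order_map_of_injective {S : Type*} [CommRing S] {σ : R →+* S}
    (hσ : Function.Injective σ) (F : R⟦X⟧) : (map σ F).order = F.order := by
  refine le_antisymm ?_ (le_order_map σ)
  rcases eq_or_ne F 0 with rfl | hF
  · simp
  rw [← coe_toNat_order hF]
  exact order_le _ (by rw [coeff_map, map_ne_zero_iff σ hσ]; exact coeff_order hF)

theorem constantCoeff_ne_zero_of_expand_map_eq_mul [IsDomain R] {p : ℕ} (hp : 1 < p)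
    {σ : R →+* R} (hσ : Function.Injective σ) {F G : R⟦X⟧} (hF : F ≠ 0)
    (hG : constantCoeff G ≠ 0) (h : expand p (by omega) (map σ F) = F * G) :
    constantCoeff F ≠ 0 := by
  have hGord : G.order = 0 := by
    by_contra hne
    exact hG (order_ne_zero_iff_constCoeff_eq_zero.1 hne)
  have hord := congrArg order h
  rw [order_expand, order_map_of_injective hσ, order_mul, hGord, add_zero,
    ← coe_toNat_order hF, nsmul_eq_mul] at hord
  intro hF0
  have hpos := order_ne_zero_iff_constCoeff_eq_zero.2 hF0
  rw [← coe_toNat_order hF] at hpos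
  norm_cast at hord hpos
  have : 0 < F.order.toNat := Nat.pos_of_ne_zero hpos
  nlinarith

end PowerSeries

namespace Polynomial

variable {R : Type*} [CommRing R]

theorem isDistinguishedAt_span_singleton {g : R[X]} {a : R} (hg : g.Monic)
    (ha : ∀ i < g.natDegree, a ∣ g.coeff i) : g.IsDistinguishedAt (Ideal.span {a}) :=
  ⟨⟨fun hi => Ideal.mem_span_singleton.2 (ha _ hi)⟩, hg⟩

namespace IsDistinguishedAt

variable {I : Ideal R} {g g' : R[X]}

theorem pow (hg : g.IsDistinguishedAt I) (n : ℕ) : (g ^ n).IsDistinguishedAt I := by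
  induction n with
  | zero => exact ⟨⟨fun h => by simp at h⟩, monic_one⟩
  | succ n ih => rw [pow_succ]; exact ih.mul hg

theorem expand_map (hg : g.IsDistinguishedAt I) {p : ℕ} (hp : p ≠ 0) {σ : R →+* R}
    (hσ : I ≤ I.comap σ) : (expand R p (g.map σ)).IsDistinguishedAt I := by
  refine ⟨⟨fun {n} hn => ?_⟩, (hg.monic.map σ).expand (Nat.pos_of_ne_zero hp)⟩
  rw [natDegree_expand] at hn
  rw [coeff_expand (Nat.pos_of_ne_zero hp)]
  split_ifs with hpn
  · rw [coeff_map]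
    refine hσ (hg.mem ?_)
    obtain ⟨m, rfl⟩ := hpn
    rw [Nat.mul_div_cancel_left _ (Nat.pos_of_ne_zero hp)]
    nlinarith [natDegree_map_le (f := σ) (p := g)]
  · exact I.zero_mem

theorem natDegree_eq_of_coe_eq_mul (hg : g.IsDistinguishedAt I)
    (hg' : g'.IsDistinguishedAt I) {h : R⟦X⟧} (hh : PowerSeries.constantCoeff h ∉ I)
    (heq : (g : R⟦X⟧) = g' * h) : g.natDegree = g'.natDegree := by
  have hI : I ≠ ⊤ := fun hI => hh (hI ▸ Submodule.mem_top)
  have hdeg := hg.coe_natDegree_eq_order_map (g : R⟦X⟧) 1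
    (by rwa [map_one, ← Ideal.ne_top_iff_one]) (mul_one _).symm
  rw [← hg'.coe_natDegree_eq_order_map (g : R⟦X⟧) h hh heq] at hdeg
  exact_mod_cast hdeg

theorem mul_natDegree_eq_of_expand_map_eq_mul (hg : g.IsDistinguishedAt I)
    (hg' : g'.IsDistinguishedAt I) {p : ℕ} (hp : p ≠ 0) {σ : R →+* R}
    (hσ : I ≤ I.comap σ) {h : R⟦X⟧} (hh : PowerSeries.constantCoeff h ∉ I)
    (heq : PowerSeries.expand p hp (PowerSeries.map σ g) = g' * h) :
    p * g.natDegree = g'.natDegree := by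
  have : Nontrivial R := ⟨⟨0, PowerSeries.constantCoeff h, fun h0 => hh (h0 ▸ I.zero_mem)⟩⟩
  rw [← polynomial_map_coe, PowerSeries.expand_coe] at heq
  rw [← (hg.expand_map hp hσ).natDegree_eq_of_coe_eq_mul hg' hh heq, natDegree_expand,
    hg.monic.natDegree_map, mul_comm]

end IsDistinguishedAt

end Polynomial

namespace WittVector

variable {p : ℕ} [Fact p.Prime] {k : Type*} [Field k] [CharP k p] [PerfectRing k p]

theorem not_p_mul_dvd_map (σ : WittVector p k →+* WittVector p k) {x : WittVector p k}
    (hx : x ≠ 0) : ¬ (p : WittVector p k) * x ∣ σ x := by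
  obtain ⟨n, w, rfl⟩ := exists_eq_pow_p_mul' x hx
  rintro ⟨y, hy⟩
  have hp0 : (p : WittVector p k) ^ n ≠ 0 := pow_ne_zero n (irreducible p).ne_zero
  have hσw : σ w = p * (w * y) := mul_left_cancel₀ hp0 <| by
    rw [map_mul, map_pow, map_natCast] at hy
    linear_combination hy
  exact (irreducible p).not_isUnit (isUnit_of_dvd_unit (Dvd.intro _ hσw.symm) (w.isUnit.map σ))

end WittVector

theorem stmt_10_general
    (p : ℕ) [Fact p.Prime] (k : Type) [Field k] [CharP k p] [PerfectRing k p]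
    (e : ℕ)
    (φ : PowerSeries (WittVector p k) →+* PowerSeries (WittVector p k))
    (hφ : ∀ (F : PowerSeries (WittVector p k)) (n : ℕ),
      PowerSeries.coeff (R := WittVector p k) n (φ F) =
        if p ∣ n then
          (WittVector.frobeniusEquiv p k) (PowerSeries.coeff (R := WittVector p k) (n / p) F)
        else 0)
    (E : Polynomial (WittVector p k)) (hEmonic : E.Monic) (hEdeg : E.natDegree = e)
    (hEcoeff : ∀ i < e, (p : WittVector p k) ∣ E.coeff i)
    (hEconst : ¬ (p : WittVector p k) ^ 2 ∣ E.coeff 0)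
    (f : Polynomial (WittVector p k)) (hfmonic : f.Monic) (b : ℕ) (hb : 1 ≤ b)
    (hfdeg : f.natDegree = b)
    (hfcoeff : ∀ i < b, (p : WittVector p k) ∣ f.coeff i) :
    ¬ ∃ (z₀ : (PowerSeries (WittVector p k))ˣ) (j : ℕ),
        φ (f : PowerSeries (WittVector p k)) =
          (z₀ : PowerSeries (WittVector p k)) * (f : PowerSeries (WittVector p k)) *
            (E : PowerSeries (WittVector p k)) ^ j := by
  rintro ⟨z₀, j, hφf⟩
  subst hfdeg hEdeg
  have hp : 1 < p := (Fact.out : p.Prime).one_lt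
  have hp0 : p ≠ 0 := by omega
  let σ : WittVector p k →+* WittVector p k := WittVector.frobeniusEquiv p k
  rw [eq_expand_map_of_coeff hp0 (σ := σ) hφ] at hφf
  have hf := Polynomial.isDistinguishedAt_span_singleton hfmonic hfcoeff
  have hE := Polynomial.isDistinguishedAt_span_singleton hEmonic hEcoeff
  have hz₀ : constantCoeff (z₀ : PowerSeries (WittVector p k)) ∉
      Ideal.span {(p : WittVector p k)} := fun hmem =>
    Ideal.span_singleton_ne_top (WittVector.irreducible p).not_isUnit <|
      Ideal.eq_top_of_isUnit_mem _ hmem (z₀.isUnit.map _)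
  have hdeg := hf.mul_natDegree_eq_of_expand_map_eq_mul (hf.mul (hE.pow j)) hp0
    (Ideal.span_le.2 <| by simp) hz₀ (by rw [hφf]; push_cast; ring)
  rw [hfmonic.natDegree_mul (hEmonic.pow j), hEmonic.natDegree_pow] at hdeg
  obtain ⟨he, hj⟩ : E.natDegree ≠ 0 ∧ j ≠ 0 := by
    rw [← mul_ne_zero_iff]
    intro h0
    nlinarith
  have hE₀ : E.coeff 0 ≠ 0 := fun h0 => hEconst (h0 ▸ dvd_zero _)
  have hf₀ : constantCoeff (f : PowerSeries (WittVector p k)) ≠ 0 :=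
    constantCoeff_ne_zero_of_expand_map_eq_mul hp (σ := σ)
      (WittVector.frobeniusEquiv p k).injective (F := f) (G := z₀ * E ^ j)
      (fun h0 => hfmonic.ne_zero (Polynomial.coe_eq_zero_iff.1 h0))
      (by simp [hE₀, (z₀.isUnit.map constantCoeff).ne_zero])
      (by rw [hφf]; ring)
  have hconst := congrArg constantCoeff hφf
  rw [constantCoeff_expand_map, map_mul, map_mul, map_pow] at hconst
  refine WittVector.not_p_mul_dvd_map σ hf₀ ?_
  rw [hconst, mul_comm (p : WittVector p k)]
  exact mul_dvd_mul (dvd_mul_left _ _) (dvd_pow (hEcoeff 0 (Nat.pos_of_ne_zero he)) hj)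

/-- Key step in the proof of Lemma 6.2(3): if `f ∈ W(k)[u]` is a monic distinguished
polynomial of degree `b ≥ 1` (all non-leading coefficients divisible by `p`), then
there are no unit `z₀ ∈ 𝔖ˣ` and natural number `j` with `φ(f) = z₀ · f · E^j`. -/
theorem stmt_10
    (p : ℕ) [Fact p.Prime] (k : Type) [Field k] [CharP k p] [PerfectRing k p]
    (e : ℕ) (he : 1 ≤ e)
    (φ : PowerSeries (WittVector p k) →+* PowerSeries (WittVector p k))
    (hφ : ∀ (F : PowerSeries (WittVector p k)) (n : ℕ),
      PowerSeries.coeff (R := WittVector p k) n (φ F) =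
        if p ∣ n then
          (WittVector.frobeniusEquiv p k) (PowerSeries.coeff (R := WittVector p k) (n / p) F)
        else 0)
    (E : Polynomial (WittVector p k)) (hEmonic : E.Monic) (hEdeg : E.natDegree = e)
    (hEcoeff : ∀ i < e, (p : WittVector p k) ∣ E.coeff i)
    (hEconst : ¬ (p : WittVector p k) ^ 2 ∣ E.coeff 0)
    (f : Polynomial (WittVector p k)) (hfmonic : f.Monic) (b : ℕ) (hb : 1 ≤ b)
    (hfdeg : f.natDegree = b)
    (hfcoeff : ∀ i < b, (p : WittVector p k) ∣ f.coeff i) :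
    ¬ ∃ (z₀ : (PowerSeries (WittVector p k))ˣ) (j : ℕ),
        φ (f : PowerSeries (WittVector p k)) =
          (z₀ : PowerSeries (WittVector p k)) * (f : PowerSeries (WittVector p k)) *
            (E : PowerSeries (WittVector p k)) ^ j :=
  stmt_10_general p k e φ hφ E hEmonic hEdeg hEcoeff hEconst f hfmonic b hb hfdeg hfcoeff
end

section
/- Let k be a perfect field of characteristic p, R = k⟦u⟧ the power series ring over k, M a finite free R-module, and σ : M → M an additive map that is semilinear over the p-power Frobenius of R, i.e. σ(a • x) = a^p • σ(x) for all a ∈ R and x ∈ M. Let N ⊆ M be an R-submodule with σ(N) ⊆ N such that the quotient M/N is killed by a power of u. Write φ*N := R ⊗_{Frob,R} N for the base change of N along the Frobenius a ↦ a^p of R, and let 1⊗σ : φ*N → N be the R-linear map a⊗x ↦ a•σ(x). Suppose there exist a natural number c and an R-linear map ψ : N → φ*N such that (1⊗σ) ∘ ψ = u^c • id_N and ψ ∘ (1⊗σ) = u^c • id_{φ*N}. If c < p − 1, then N = M. (This is the key module-theoretic step in the proof of Corollary 7.13 (cor-small-Breuil), applied with c = e·i.) -/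
open PowerSeries

/-!
It suffices to show that `u ^ (l + 1) • M ⊆ N` implies `u ^ l • M ⊆ N`. For `x : M`, the element
`n = u ^ (l + 1) • x` of `N` satisfies `(1 ⊗ σ) (1 ⊗ n) = σ n = u ^ ((p - 1) * (l + 1)) • m` with
`m = u ^ (l + 1) • σ x ∈ N`, so applying `ψ` gives `u ^ c • (1 ⊗ n) ∈ u ^ ((p - 1) * (l + 1)) • φ*N`.
In the base change of a basis of `N`, the coordinates of `1 ⊗ n` are the `p`-th powers of those of
`n`; as `c < (p - 1) * (l + 1)`, `u` divides all of them, so `n ∈ u • N` and, `M` being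
torsion-free, `u ^ l • x ∈ N`.
-/

theorem Module.Basis.exists_smul_eq_of_forall_dvd_repr {ι R M : Type*} [CommSemiring R]
    [AddCommMonoid M] [Module R M] (b : Module.Basis ι R M) {π : R} {x : M}
    (h : ∀ i, π ∣ b.repr x i) : ∃ y, π • y = x := by
  choose f hf using h
  refine ⟨(b.repr x).sum fun i _ => f i • b i, ?_⟩
  conv_rhs => rw [← b.linearCombination_repr x, Finsupp.linearCombination_apply]
  simp only [Finsupp.smul_sum, smul_smul, ← hf]
  exact Finsupp.sum_congr fun i _ => rfl

namespace IsSemilinearBaseChange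

variable {R : Type} [CommRing R] {φ : R →+* R} {N P : Type} [AddCommGroup N] [Module R N]
  [AddCommGroup P] [Module R P] {ι : N →ₛₗ[φ] P}

theorem exists_linearMap_apply_eq_repr (hbc : IsSemilinearBaseChange φ ι) {κ : Type}
    (b : Module.Basis κ R N) :
    ∃ h : P →ₗ[R] (κ → R), ∀ x i, h (ι x) i = φ (b.repr x i) := by
  obtain ⟨h, hh, -⟩ := hbc (κ → R)
    { toFun := fun x i => φ (b.repr x i)
      map_add' := fun x y => by funext i; simp
      map_smul' := fun a x => by funext i; simp }
  exact ⟨h, fun x i => congrFun (hh x) i⟩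

theorem dvd_apply_repr_of_pow_smul_eq [IsDomain R] (hbc : IsSemilinearBaseChange φ ι)
    {κ : Type} (b : Module.Basis κ R N) {π : R} (hπ : π ≠ 0) {c t : ℕ} (hct : c < t)
    {x : N} {y : P} (hxy : π ^ c • ι x = π ^ t • y) (i : κ) : π ∣ φ (b.repr x i) := by
  obtain ⟨h, hh⟩ := hbc.exists_linearMap_apply_eq_repr b
  have hi : π ^ c * φ (b.repr x i) = π ^ c * (π ^ (t - c) * h y i) := by
    have := congrFun (congrArg h hxy) i
    simp only [map_smul, Pi.smul_apply, smul_eq_mul, hh] at this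
    rw [this, ← mul_assoc, ← pow_add, Nat.add_sub_cancel' hct.le]
  rw [mul_left_cancel₀ (pow_ne_zero c hπ) hi]
  exact (dvd_pow_self π (Nat.sub_ne_zero_of_lt hct)).mul_right _

end IsSemilinearBaseChange

section Descent

variable {R : Type} [CommRing R] [IsDomain R] {p : ℕ} {φ : R →+* R} (hφ : ∀ a, φ a = a ^ p)
  {M : Type} [AddCommGroup M] [Module R M] [Module.IsTorsionFree R M]
  {σ : M →+ M} (hσ : ∀ (a : R) (x : M), σ (a • x) = a ^ p • σ x)
  {N : Submodule R M} {κ : Type} (b : Module.Basis κ R N)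
  {P : Type} [AddCommGroup P] [Module R P] {ι : N →ₛₗ[φ] P} (hbc : IsSemilinearBaseChange φ ι)
  {θ : P →ₗ[R] N} (hθ : ∀ x : N, (θ (ι x) : M) = σ x)
  {π : R} (hπ : Prime π) {c : ℕ} (hc : c < p - 1)
  {ψ : N →ₗ[R] P} (hψθ : ∀ y : P, ψ (θ y) = π ^ c • y)
include hφ hσ b hbc hθ hπ hc hψθ

theorem pow_smul_mem_of_pow_succ_smul_mem {l : ℕ} (hl : ∀ x : M, π ^ (l + 1) • x ∈ N)
    (x : M) : π ^ l • x ∈ N := by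
  set n : N := ⟨π ^ (l + 1) • x, hl x⟩
  set m : N := ⟨π ^ (l + 1) • σ x, hl (σ x)⟩
  have hp : 1 ≤ p := by omega
  have hθn : θ (ι n) = π ^ ((p - 1) * (l + 1)) • m := by
    apply Subtype.ext
    rw [hθ, Submodule.coe_smul, hσ, smul_smul, ← pow_mul, ← pow_add]
    congr 2
    rw [Nat.sub_one_mul, mul_comm]
    have : l + 1 ≤ p * (l + 1) := Nat.le_mul_of_pos_left _ hp
    omega
  have hψ : π ^ c • ι n = π ^ ((p - 1) * (l + 1)) • ψ m := by
    rw [← hψθ, hθn, map_smul]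
  have hct : c < (p - 1) * (l + 1) := lt_of_lt_of_le hc (Nat.le_mul_of_pos_right _ l.succ_pos)
  obtain ⟨n', hn'⟩ := b.exists_smul_eq_of_forall_dvd_repr fun i =>
    hπ.dvd_of_dvd_pow (hφ _ ▸ hbc.dvd_apply_repr_of_pow_smul_eq b hπ.ne_zero hct hψ i)
  have : π • (π ^ l • x) = π • (n' : M) := by
    rw [← Submodule.coe_smul, hn', smul_smul, ← pow_succ']
  rw [smul_right_injective M hπ.ne_zero this]
  exact n'.2

theorem eq_top_of_pow_smul_mem {l : ℕ} (hl : ∀ x : M, π ^ l • x ∈ N) : N = ⊤ := by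
  induction l with
  | zero => exact eq_top_iff.2 fun x _ => by simpa using hl x
  | succ l ih =>
    exact ih (pow_smul_mem_of_pow_succ_smul_mem hφ hσ b hbc hθ hπ hc hψθ hl)

end Descent

theorem stmt_13_general (p : ℕ) (k : Type) [Field k]
    (fr : PowerSeries k →+* PowerSeries k) (hfr : ∀ a : PowerSeries k, fr a = a ^ p)
    (M : Type) [AddCommGroup M] [Module (PowerSeries k) M]
    [Module.Finite (PowerSeries k) M] [Module.Free (PowerSeries k) M]
    (σ : M →+ M) (hσ : ∀ (a : PowerSeries k) (x : M), σ (a • x) = a ^ p • σ x)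
    (N : Submodule (PowerSeries k) M)
    (hquot : ∃ l : ℕ, ∀ x : M, (PowerSeries.X : PowerSeries k) ^ l • x ∈ N)
    (P : Type) [AddCommGroup P] [Module (PowerSeries k) P]
    (ι : N →ₛₗ[fr] P) (hbc : IsSemilinearBaseChange fr ι)
    (θ : P →ₗ[PowerSeries k] N) (hθ : ∀ x : N, ((θ (ι x)) : M) = σ (x : M))
    (c : ℕ) (hc : c < p - 1)
    (ψ : N →ₗ[PowerSeries k] P)
    (hψθ : ∀ y : P, ψ (θ y) = (PowerSeries.X : PowerSeries k) ^ c • y) :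
    N = ⊤ := by
  obtain ⟨_, b⟩ := Submodule.basisOfPid (Module.Free.chooseBasis (PowerSeries k) M) N
  obtain ⟨l, hl⟩ := hquot
  exact eq_top_of_pow_smul_mem hfr hσ b hbc hθ X_prime hc hψθ hl

/-- Key module-theoretic step in the proof of Corollary 7.13: let `R = k⟦u⟧` with `k` a
perfect field of characteristic `p`, `M` a finite free `R`-module, `σ : M → M` an
additive map semilinear over the `p`-power Frobenius `fr` of `R`, and `N ⊆ M` a
submodule with `σ(N) ⊆ N` and `M/N` killed by a power of `u`.  If `N` carries a map
`ψ : N → φ*N` with `(1⊗σ) ∘ ψ = u^c • id` and `ψ ∘ (1⊗σ) = u^c • id` for some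
`c < p - 1`, then `N = M`. -/
theorem stmt_13 (p : ℕ) [Fact p.Prime] (k : Type) [Field k] [CharP k p] [PerfectRing k p]
    (fr : PowerSeries k →+* PowerSeries k) (hfr : ∀ a : PowerSeries k, fr a = a ^ p)
    (M : Type) [AddCommGroup M] [Module (PowerSeries k) M]
    [Module.Finite (PowerSeries k) M] [Module.Free (PowerSeries k) M]
    (σ : M →+ M) (hσ : ∀ (a : PowerSeries k) (x : M), σ (a • x) = a ^ p • σ x)
    (N : Submodule (PowerSeries k) M) (hσN : ∀ x ∈ N, σ x ∈ N)
    (hquot : ∃ l : ℕ, ∀ x : M, (PowerSeries.X : PowerSeries k) ^ l • x ∈ N)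
    (P : Type) [AddCommGroup P] [Module (PowerSeries k) P]
    (ι : N →ₛₗ[fr] P) (hbc : IsSemilinearBaseChange fr ι)
    (θ : P →ₗ[PowerSeries k] N) (hθ : ∀ x : N, ((θ (ι x)) : M) = σ (x : M))
    (c : ℕ) (hc : c < p - 1)
    (ψ : N →ₗ[PowerSeries k] P)
    (hθψ : ∀ x : N, θ (ψ x) = (PowerSeries.X : PowerSeries k) ^ c • x)
    (hψθ : ∀ y : P, ψ (θ y) = (PowerSeries.X : PowerSeries k) ^ c • y) :
    N = ⊤ :=
  stmt_13_general p k fr hfr M σ hσ N hquot P ι hbc θ hθ c hc ψ hψθ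
end

section
/- Let p be a prime, k a perfect field of characteristic p, and e ≥ 1 a natural number. Let R be the quotient of the polynomial ring k[X₀, X₁, X₂, …] in countably many variables by the ideal generated by X₀^{p·e} together with X_i^p for all i ≥ 1. Then R is a coherent ring: every finitely generated ideal of R is finitely presented as an R-module. (This is the base case n = 1 of Lemma 7.1, via the identification S/p ≅ k[u]/u^{pe} ⊗_k k[u₁,u₂,…]/(u_i^p).) -/
/-!
A finitely generated ideal of `R = k[Xᵢ]/(Xᵢ ^ nᵢ)` is generated by the images of polynomials
involving only the variables indexed by some finite set `T`. Writing `A_T` for the same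
construction on the variables in `T`, we have `R ≅ A_T ⊗[k] A_Tᶜ`, so `R` is flat over the
Noetherian ring `A_T`, and the ideal is the extension of an ideal of `A_T`. By flatness that
extension is the base change of a finitely presented `A_T`-module, hence finitely presented.
-/

open MvPolynomial TensorProduct

abbrev TruncatedMvPolynomial (σ k : Type*) [CommRing k] (n : σ → ℕ) :=
  MvPolynomial σ k ⧸ Ideal.span (Set.range fun i => (X i ^ n i : MvPolynomial σ k))

noncomputable section

theorem Ideal.finitePresentation_map_of_flat {A R : Type*} [CommRing A] [CommRing R]
    [Algebra A R] [IsNoetherianRing A] [Module.Flat A R] (J : Ideal A) :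
    Module.FinitePresentation R (J.map (algebraMap A R)) := by
  have : Module.FinitePresentation A J := Module.finitePresentation_of_finite A J
  let μ : R ⊗[A] J →ₗ[R] R := (Algebra.linearMap A R ∘ₗ J.subtype).liftBaseChange R
  have hμ : μ = (AlgebraTensorModule.rid A R R).toLinearMap ∘ₗ
      AlgebraTensorModule.lTensor R R J.subtype := by
    ext; simp [μ, Algebra.smul_def]
  have hμ_injective : Function.Injective μ := by
    rw [hμ]
    exact (AlgebraTensorModule.rid A R R).injective.comp
      (Module.Flat.lTensor_preserves_injective_linearMap J.subtype J.injective_subtype)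
  have hμ_range : LinearMap.range μ = J.map (algebraMap A R) := by
    rw [LinearMap.range_liftBaseChange, LinearMap.range_comp, Submodule.range_subtype]
    rfl
  exact .of_equiv ((LinearEquiv.ofInjective μ hμ_injective).trans (.ofEq _ _ hμ_range))

theorem Ideal.finitePresentation_span_of_flat {A R : Type*} [CommRing A] [CommRing R]
    [IsNoetherianRing A] (f : A →+* R) (hf : f.Flat) {s : Set R} (hs : s ⊆ Set.range f) :
    Module.FinitePresentation R (Ideal.span s) := by
  algebraize [f]
  rw [← Set.image_preimage_eq_of_subset hs, ← Ideal.map_span]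
  exact Ideal.finitePresentation_map_of_flat _

theorem RingHom.flat_algEquiv_comp_algebraMap {k A B R : Type*} [CommRing k] [CommRing A]
    [CommRing B] [CommRing R] [Algebra k A] [Algebra k B] [Algebra k R] [Module.Flat k B]
    (e : A ⊗[k] B ≃ₐ[k] R) : (e.toRingEquiv.toRingHom.comp (algebraMap A (A ⊗[k] B))).Flat :=
  (RingHom.flat_algebraMap_iff.mpr inferInstance).comp (.of_bijective e.bijective)

namespace TruncatedMvPolynomial

variable {σ : Type*} (n : σ → ℕ)

section CommRing

variable {k : Type*} [CommRing k]

def mk : MvPolynomial σ k →ₐ[k] TruncatedMvPolynomial σ k n := Ideal.Quotient.mkₐ k _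

lemma mk_surjective : Function.Surjective (mk (k := k) n) := Ideal.Quotient.mk_surjective

lemma mk_X_pow (i : σ) : mk (k := k) n (X i) ^ n i = 0 := by
  rw [← map_pow]
  exact Ideal.Quotient.eq_zero_iff_mem.mpr (Ideal.subset_span ⟨i, rfl⟩)

def lift {B : Type*} [CommSemiring B] [Algebra k B] (x : σ → B) (hx : ∀ i, x i ^ n i = 0) :
    TruncatedMvPolynomial σ k n →ₐ[k] B :=
  Ideal.Quotient.liftₐ _ (aeval x) fun _ ha =>
    (Ideal.span_le (I := RingHom.ker (aeval x)).mpr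
      (Set.range_subset_iff.mpr fun i => by simp [hx])) ha

@[simp]
lemma lift_mk {B : Type*} [CommSemiring B] [Algebra k B] (x : σ → B) (hx : ∀ i, x i ^ n i = 0)
    (f : MvPolynomial σ k) : lift n x hx (mk n f) = aeval x f :=
  rfl

@[ext]
lemma algHom_ext {B : Type*} [Semiring B] [Algebra k B]
    {φ ψ : TruncatedMvPolynomial σ k n →ₐ[k] B}
    (h : ∀ i, φ (mk n (X i)) = ψ (mk n (X i))) : φ = ψ :=
  Ideal.Quotient.algHom_ext k (MvPolynomial.algHom_ext h)

def rename {τ : Type*} (f : σ → τ) (n : τ → ℕ) :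
    TruncatedMvPolynomial σ k (n ∘ f) →ₐ[k] TruncatedMvPolynomial τ k n :=
  lift _ (fun i => mk n (X (f i))) fun i => mk_X_pow n (f i)

@[simp]
lemma rename_mk {τ : Type*} (f : σ → τ) (n : τ → ℕ) (p : MvPolynomial σ k) :
    rename f n (mk (n ∘ f) p) = mk n (MvPolynomial.rename f p) := by
  rw [rename, lift_mk, aeval_unique (mk n), aeval_rename]
  simp only [aeval_X, Function.comp_def]

lemma exists_finite_subset_range_rename {s : Set (TruncatedMvPolynomial σ k n)}
    (hs : s.Finite) : ∃ T : Set σ, T.Finite ∧ s ⊆ Set.range (rename ((↑) : T → σ) n) := by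
  choose p hp using mk_surjective (k := k) n
  let T : Set σ := ⋃ x ∈ s, ((p x).vars : Set σ)
  refine ⟨T, hs.biUnion fun x _ => (p x).vars.finite_toSet, fun x hx => ?_⟩
  have hvars : ((p x).vars : Set σ) ⊆ Set.range ((↑) : T → σ) := by
    rw [Subtype.range_coe]
    exact Set.subset_biUnion_of_mem (u := fun x => ((p x).vars : Set σ)) hx
  obtain ⟨q, hq⟩ := exists_rename_eq_of_vars_subset_range (p x) _ Subtype.val_injective hvars
  exact ⟨mk _ q, by rw [rename_mk, hq, hp]⟩

variable (T : Set σ)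

open Classical in
def splitHom : TruncatedMvPolynomial σ k n →ₐ[k]
    TruncatedMvPolynomial T k (n ∘ (↑)) ⊗[k] TruncatedMvPolynomial ↑Tᶜ k (n ∘ (↑)) :=
  lift n (fun i => if h : i ∈ T then mk (k := k) (n ∘ ((↑) : T → σ)) (X ⟨i, h⟩) ⊗ₜ[k] 1
      else 1 ⊗ₜ[k] mk (k := k) (n ∘ ((↑) : ↑Tᶜ → σ)) (X ⟨i, h⟩))
    fun i => by
      split_ifs with h
      · rw [Algebra.TensorProduct.tmul_pow, one_pow,
          show n i = (n ∘ (↑)) (⟨i, h⟩ : T) from rfl, mk_X_pow, zero_tmul]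
      · rw [Algebra.TensorProduct.tmul_pow, one_pow,
          show n i = (n ∘ (↑)) (⟨i, h⟩ : ↑Tᶜ) from rfl, mk_X_pow, tmul_zero]

def splitAlgEquiv : TruncatedMvPolynomial σ k n ≃ₐ[k]
    TruncatedMvPolynomial T k (n ∘ (↑)) ⊗[k] TruncatedMvPolynomial ↑Tᶜ k (n ∘ (↑)) :=
  AlgEquiv.ofAlgHom (splitHom n T)
    (Algebra.TensorProduct.lift (rename Subtype.val n) (rename Subtype.val n)
      fun _ _ => .all _ _)
    (by
      ext i
      · simp [splitHom, i.2]
      · simp [splitHom, Set.notMem_of_mem_compl i.2])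
    (by ext i; by_cases h : i ∈ T <;> simp [splitHom, h])

lemma rename_val_eq_splitAlgEquiv_symm_comp :
    (rename (k := k) ((↑) : T → σ) n).toRingHom =
      (splitAlgEquiv (k := k) n T).symm.toRingEquiv.toRingHom.comp (algebraMap _ _) := by
  have : rename ((↑) : T → σ) n =
      (splitAlgEquiv (k := k) n T).symm.toAlgHom.comp Algebra.TensorProduct.includeLeft := by
    ext i
    simp [splitAlgEquiv]
  rw [this]
  rfl

end CommRing

variable {k : Type*} [Field k]

lemma flat_rename_val (T : Set σ) : (rename (k := k) ((↑) : T → σ) n).toRingHom.Flat := by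
  rw [rename_val_eq_splitAlgEquiv_symm_comp]
  exact RingHom.flat_algEquiv_comp_algebraMap _

theorem finitePresentation_of_fg (I : Ideal (TruncatedMvPolynomial σ k n)) (hI : I.FG) :
    Module.FinitePresentation (TruncatedMvPolynomial σ k n) I := by
  obtain ⟨s, rfl⟩ := hI
  obtain ⟨T, hT, hs⟩ := exists_finite_subset_range_rename n s.finite_toSet
  have := hT.to_subtype
  exact Ideal.finitePresentation_span_of_flat _ (flat_rename_val n T) hs

end TruncatedMvPolynomial

end

theorem stmt_14_general (p e : ℕ)
    (k : Type) [Field k] :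
    ∀ I : Ideal (MvPolynomial ℕ k ⧸
        Ideal.span (insert (MvPolynomial.X 0 ^ (p * e))
          {f : MvPolynomial ℕ k | ∃ i : ℕ, 1 ≤ i ∧ f = MvPolynomial.X i ^ p})),
      I.FG → Module.FinitePresentation
        (MvPolynomial ℕ k ⧸
          Ideal.span (insert (MvPolynomial.X 0 ^ (p * e))
            {f : MvPolynomial ℕ k | ∃ i : ℕ, 1 ≤ i ∧ f = MvPolynomial.X i ^ p})) I := by
  have hrel : insert (X 0 ^ (p * e)) {f : MvPolynomial ℕ k | ∃ i : ℕ, 1 ≤ i ∧ f = X i ^ p} =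
      Set.range fun i => X i ^ (if i = 0 then p * e else p) := by
    ext f
    constructor
    · rintro (rfl | ⟨i, hi, rfl⟩)
      exacts [⟨0, by simp⟩, ⟨i, by simp [Nat.one_le_iff_ne_zero.mp hi]⟩]
    · rintro ⟨_ | i, rfl⟩
      exacts [.inl (by simp), .inr ⟨i + 1, by simp⟩]
  rw [hrel]
  exact TruncatedMvPolynomial.finitePresentation_of_fg _

/-- Base case (`n = 1`) of **Lemma 7.1**: the ring
`R = k[X₀, X₁, X₂, …]/(X₀^{p·e}, Xᵢ^p (i ≥ 1))` — which is `S/p` for Breuil's ring `S` —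
is coherent: every finitely generated ideal of `R` is finitely presented as an
`R`-module. -/
theorem stmt_14 (p e : ℕ) [Fact p.Prime] (he : 1 ≤ e)
    (k : Type) [Field k] [CharP k p] [PerfectRing k p] :
    ∀ I : Ideal (MvPolynomial ℕ k ⧸
        Ideal.span (insert (MvPolynomial.X 0 ^ (p * e))
          {f : MvPolynomial ℕ k | ∃ i : ℕ, 1 ≤ i ∧ f = MvPolynomial.X i ^ p})),
      I.FG → Module.FinitePresentation
        (MvPolynomial ℕ k ⧸
          Ideal.span (insert (MvPolynomial.X 0 ^ (p * e))
            {f : MvPolynomial ℕ k | ∃ i : ℕ, 1 ≤ i ∧ f = MvPolynomial.X i ^ p})) I :=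
  stmt_14_general p e k
end
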